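/- For every integer k ≥ 1 and every ε > 0 there exist constants C = C(k,ε) and d = d(k,ε) such that for every graph G on n vertices with mad(G) ≤ k − ε, any two k-colorings of G are Kempe equivalent up to C·n^d Kempe changes. -/

import Mathlib

open SimpleGraph

/-- A proper coloring of `G` with colors in `C`. -/
def IsProperColoring {V C : Type*} (G : SimpleGraph V) (α : V → C) : Prop :=
  ∀ ⦃u v : V⦄, G.Adj u v → α u ≠ α v

/-- `u` lies in the Kempe chain of `v` for the colors `a`, `b`, computed in the
subgraph of `G` induced by the vertex set `S`. -/
def InKempeChainOn {V C : Type*} (G : SimpleGraph V) (S : Set V) (α : V → C)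
    (a b : C) (v u : V) : Prop :=
  Relation.ReflTransGen
    (fun x y => G.Adj x y ∧ x ∈ S ∧ y ∈ S ∧ (α x = a ∨ α x = b) ∧ (α y = a ∨ α y = b)) v u

/-- `u` lies in the Kempe chain of `v` for the colors `a`, `b` in `G`. -/
def InKempeChain {V C : Type*} (G : SimpleGraph V) (α : V → C) (a b : C) (v u : V) : Prop :=
  InKempeChainOn G Set.univ α a b v u

/-- `β` is obtained from `α` by performing a single Kempe change: the colors `a` and `b`
are swapped on the Kempe chain containing `v`. -/
def KempeStep {V C : Type*} [DecidableEq C] (G : SimpleGraph V) (α β : V → C) : Prop :=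
  ∃ (a b : C) (v : V), (α v = a ∨ α v = b) ∧
    (∀ u, InKempeChain G α a b v u → β u = Equiv.swap a b (α u)) ∧
    (∀ u, ¬InKempeChain G α a b v u → β u = α u)

/-- `α` and `β` are Kempe equivalent up to `N` Kempe changes, all intermediate
colorings satisfying the predicate `P`. -/
def KempeEquivIn {V C : Type*} [DecidableEq C] (G : SimpleGraph V) (P : (V → C) → Prop)
    (N : ℕ) (α β : V → C) : Prop :=
  ∃ (m : ℕ) (f : ℕ → V → C), m ≤ N ∧ f 0 = α ∧ f m = β ∧
    (∀ i ≤ m, P (f i)) ∧ ∀ i < m, KempeStep G (f i) (f (i + 1))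


/-!
Since `mad(G) ≤ k - ε`, every vertex set `W` contains an independent set `S` of size at least
`ε |W| / (k² + 1)` whose vertices have fewer than `k` neighbors in `W`. Recolor `W \ S`
recursively and lift that recoloring to `W` phase by phase, a phase being a batch of Kempe changes
for one pair of colors `a`, `b`. Before the phase, each vertex of `S` having a spare color (neither
`a`, `b` nor used by a neighbor) is moved to it by a single-vertex Kempe change; the
`a`/`b`-colored vertices of `S` that remain have at most one `a`/`b`-colored neighbor, so they
cannot join two Kempe chains of `W \ S`, and the phase acts on `W \ S` exactly as before. A final
batch of single-vertex changes recolors `S`. Each level of the recursion multiplies the number of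
phases by `k² + 1` while shrinking `|W|` by a constant factor, so there are polynomially many
phases, each of at most `n` Kempe changes.
-/

open Finset
open scoped Classical

lemma SimpleGraph.IsIndepSet.not_adj {V : Type*} {G : SimpleGraph V} {s : Set V}
    (h : G.IsIndepSet s) {u w : V} (hu : u ∈ s) (hw : w ∈ s) : ¬G.Adj u w :=
  fun huw => h hu hw (G.ne_of_adj huw) huw

section Chains

variable {V C : Type*} {G : SimpleGraph V} {S : Set V} {γ γ' : V → C} {a b : C} {v u : V}

lemma InKempeChainOn.mem (hv : v ∈ S) (h : InKempeChainOn G S γ a b v u) : u ∈ S := by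
  induction h with
  | refl => exact hv
  | tail _ hxy _ => exact hxy.2.2.1

lemma InKempeChainOn.color (hv : γ v = a ∨ γ v = b) (h : InKempeChainOn G S γ a b v u) :
    γ u = a ∨ γ u = b := by
  induction h with
  | refl => exact hv
  | tail _ hxy _ => exact hxy.2.2.2.2

lemma InKempeChainOn.mono {T : Set V} (hST : S ⊆ T) (h : InKempeChainOn G S γ a b v u) :
    InKempeChainOn G T γ a b v u :=
  Relation.ReflTransGen.mono
    (fun _ _ ⟨hxy, hx, hy, hcx, hcy⟩ => ⟨hxy, hST hx, hST hy, hcx, hcy⟩) _ _ h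

lemma InKempeChainOn.congr (hγ : ∀ x ∈ S, γ x = γ' x) (h : InKempeChainOn G S γ a b v u) :
    InKempeChainOn G S γ' a b v u :=
  Relation.ReflTransGen.mono
    (fun x y ⟨hxy, hx, hy, hcx, hcy⟩ => ⟨hxy, hx, hy, hγ x hx ▸ hcx, hγ y hy ▸ hcy⟩)
    _ _ h

lemma InKempeChainOn.eq_of_forall_adj (hnb : ∀ w ∈ S, G.Adj v w → ¬(γ w = a ∨ γ w = b))
    (h : InKempeChainOn G S γ a b v u) : u = v := by
  induction h with
  | refl => rfl
  | tail _ hxy ih => subst ih; exact absurd hxy.2.2.2.2 (hnb _ hxy.2.2.1 hxy.1)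

lemma InKempeChainOn.tail {w : V} (h : InKempeChainOn G S γ a b v u) (huw : G.Adj u w)
    (hu : u ∈ S) (hw : w ∈ S) (hcu : γ u = a ∨ γ u = b) (hcw : γ w = a ∨ γ w = b) :
    InKempeChainOn G S γ a b v w :=
  Relation.ReflTransGen.tail h ⟨huw, hu, hw, hcu, hcw⟩

end Chains

section KempeEquivIn

variable {V C : Type*} [DecidableEq C] {G : SimpleGraph V} {P : (V → C) → Prop} {N M : ℕ}
  {α β γ : V → C}

lemma KempeEquivIn.refl (hα : P α) : KempeEquivIn G P 0 α α :=
  ⟨0, fun _ => α, le_rfl, rfl, rfl, fun _ _ => hα, fun _ h => absurd h (Nat.not_lt_zero _)⟩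

lemma KempeEquivIn.mono (h : KempeEquivIn G P N α β) (hNM : N ≤ M) : KempeEquivIn G P M α β :=
  let ⟨m, f, hm, h0, hf, hP, hstep⟩ := h
  ⟨m, f, hm.trans hNM, h0, hf, hP, hstep⟩

lemma KempeStep.kempeEquivIn (h : KempeStep G α β) (hα : P α) (hβ : P β) :
    KempeEquivIn G P 1 α β := by
  refine ⟨1, fun i => if i = 0 then α else β, le_rfl, rfl, rfl, fun i _ => ?_, fun i hi => ?_⟩
  · dsimp only
    split_ifs
    exacts [hα, hβ]
  · obtain rfl : i = 0 := by omega
    exact h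

lemma KempeEquivIn.trans (h₁ : KempeEquivIn G P N α β) (h₂ : KempeEquivIn G P M β γ) :
    KempeEquivIn G P (N + M) α γ := by
  obtain ⟨m₁, f₁, hm₁, hf₁0, hf₁m, hP₁, hstep₁⟩ := h₁
  obtain ⟨m₂, f₂, hm₂, hf₂0, hf₂m, hP₂, hstep₂⟩ := h₂
  set f := fun i => if i ≤ m₁ then f₁ i else f₂ (i - m₁)
  have hleft : ∀ i ≤ m₁, f i = f₁ i := fun i hi => if_pos hi
  have hright : ∀ i, m₁ ≤ i → f i = f₂ (i - m₁) := by
    intro i hi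
    rcases hi.eq_or_lt with rfl | hi
    · rw [hleft _ le_rfl, hf₁m, Nat.sub_self, hf₂0]
    · exact if_neg hi.not_ge
  refine ⟨m₁ + m₂, f, by omega, by rw [hleft 0 (Nat.zero_le _), hf₁0],
    by rw [hright _ (by omega), Nat.add_sub_cancel_left, hf₂m], fun i hi => ?_, fun i hi => ?_⟩
  · rcases le_total i m₁ with h | h
    · rw [hleft i h]; exact hP₁ i h
    · rw [hright i h]; exact hP₂ _ (by omega)
  · rcases lt_or_ge i m₁ with h | h
    · rw [hleft i h.le, hleft (i + 1) h]; exact hstep₁ i h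
    · rw [hright i h, hright (i + 1) (by omega), show i + 1 - m₁ = i - m₁ + 1 by omega]
      exact hstep₂ _ (by omega)

end KempeEquivIn

namespace Kempe

variable {V C : Type*}

def ProperOn (G : SimpleGraph V) (W : Finset V) (γ : V → C) : Prop :=
  ∀ ⦃u⦄, u ∈ W → ∀ ⦃w⦄, w ∈ W → G.Adj u w → γ u ≠ γ w

noncomputable def degOn (G : SimpleGraph V) (W : Finset V) (v : V) : ℕ :=
  #{u ∈ W | G.Adj v u}

lemma swap_apply_eq_or_eq_iff [DecidableEq C] {a b c : C} :
    (Equiv.swap a b c = a ∨ Equiv.swap a b c = b) ↔ (c = a ∨ c = b) := by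
  rw [Equiv.swap_apply_eq_iff, Equiv.swap_apply_eq_iff, Equiv.swap_apply_left,
    Equiv.swap_apply_right, or_comm]

section Flip

variable [DecidableEq C]

noncomputable def kempeFlip (G : SimpleGraph V) (W : Finset V) (γ : V → C) (a b : C) (v : V) :
    V → C :=
  if v ∈ W ∧ (γ v = a ∨ γ v = b) then
    fun u => if InKempeChainOn G W γ a b v u then Equiv.swap a b (γ u) else γ u
  else γ

variable {G : SimpleGraph V} {W : Finset V} {γ γ' : V → C} {a b : C} {v u : V}

lemma kempeFlip_of_not (h : ¬(v ∈ W ∧ (γ v = a ∨ γ v = b))) :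
    kempeFlip G W γ a b v = γ :=
  if_neg h

lemma kempeFlip_of_chain (hv : v ∈ W ∧ (γ v = a ∨ γ v = b))
    (hc : InKempeChainOn G W γ a b v u) : kempeFlip G W γ a b v u = Equiv.swap a b (γ u) := by
  simp only [kempeFlip, if_pos hv, if_pos hc]

lemma kempeFlip_of_not_chain (hc : ¬InKempeChainOn G W γ a b v u) :
    kempeFlip G W γ a b v u = γ u := by
  by_cases hv : v ∈ W ∧ (γ v = a ∨ γ v = b)
  · simp only [kempeFlip, if_pos hv, if_neg hc]
  · rw [kempeFlip_of_not hv]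

lemma kempeFlip_eq_or_eq_iff :
    (kempeFlip G W γ a b v u = a ∨ kempeFlip G W γ a b v u = b) ↔
      (γ u = a ∨ γ u = b) := by
  by_cases hv : v ∈ W ∧ (γ v = a ∨ γ v = b)
  · by_cases hc : InKempeChainOn G W γ a b v u
    · rw [kempeFlip_of_chain hv hc, swap_apply_eq_or_eq_iff]
    · rw [kempeFlip_of_not_chain hc]
  · rw [kempeFlip_of_not hv]

/-- An edge leaving the chain has an endpoint colored neither `a` nor `b`. -/
lemma ProperOn.kempeFlip (h : ProperOn G W γ) : ProperOn G W (kempeFlip G W γ a b v) := by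
  by_cases hv : v ∈ W ∧ (γ v = a ∨ γ v = b)
  swap
  · rwa [kempeFlip_of_not hv]
  have key : ∀ ⦃x⦄, x ∈ W → ∀ ⦃y⦄, y ∈ W → G.Adj x y →
      InKempeChainOn G W γ a b v x → ¬InKempeChainOn G W γ a b v y →
      Equiv.swap a b (γ x) ≠ γ y := fun x hx y hy hxy hcx hcy hxy' =>
    hcy (hcx.tail hxy hx hy (hcx.color hv.2)
      (hxy' ▸ swap_apply_eq_or_eq_iff.mpr (hcx.color hv.2)))
  intro x hx y hy hxy
  by_cases hcx : InKempeChainOn G W γ a b v x <;> by_cases hcy : InKempeChainOn G W γ a b v y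
  · rw [kempeFlip_of_chain hv hcx, kempeFlip_of_chain hv hcy]
    exact fun e => h hx hy hxy (Equiv.injective _ e)
  · rw [kempeFlip_of_chain hv hcx, kempeFlip_of_not_chain hcy]
    exact key hx hy hxy hcx hcy
  · rw [kempeFlip_of_not_chain hcx, kempeFlip_of_chain hv hcy]
    exact (key hy hx hxy.symm hcy hcx).symm
  · rw [kempeFlip_of_not_chain hcx, kempeFlip_of_not_chain hcy]
    exact h hx hy hxy

lemma kempeFlip_congr (hγ : ∀ x ∈ W, γ x = γ' x) (hu : u ∈ W) :
    kempeFlip G W γ a b v u = kempeFlip G W γ' a b v u := by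
  by_cases hv : v ∈ W ∧ (γ v = a ∨ γ v = b)
  · have hv' : v ∈ W ∧ (γ' v = a ∨ γ' v = b) := ⟨hv.1, hγ v hv.1 ▸ hv.2⟩
    by_cases hc : InKempeChainOn G W γ a b v u
    · rw [kempeFlip_of_chain hv hc, kempeFlip_of_chain hv' (hc.congr hγ), hγ u hu]
    · have hc' : ¬InKempeChainOn G W γ' a b v u := fun h =>
        hc (h.congr fun x hx => (hγ x hx).symm)
      rw [kempeFlip_of_not_chain hc, kempeFlip_of_not_chain hc', hγ u hu]
  · have hv' : ¬(v ∈ W ∧ (γ' v = a ∨ γ' v = b)) := fun h' =>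
      hv ⟨h'.1, (hγ v h'.1).symm ▸ h'.2⟩
    rw [kempeFlip_of_not hv, kempeFlip_of_not hv', hγ u hu]

lemma kempeFlip_eq_update (hv : v ∈ W ∧ (γ v = a ∨ γ v = b))
    (hnb : ∀ w ∈ W, G.Adj v w → ¬(γ w = a ∨ γ w = b)) :
    kempeFlip G W γ a b v = Function.update γ v (Equiv.swap a b (γ v)) := by
  funext u
  by_cases huv : u = v
  · subst huv
    rw [kempeFlip_of_chain hv Relation.ReflTransGen.refl, Function.update_self]
  · rw [Function.update_of_ne huv, kempeFlip_of_not_chain fun hc => huv (hc.eq_of_forall_adj hnb)]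

end Flip

structure Phase (V C : Type*) where
  a : C
  b : C
  verts : Finset V

section Scripts

variable [DecidableEq C] (G : SimpleGraph V) (W : Finset V)

noncomputable def runFlips (γ : V → C) (a b : C) (l : List V) : V → C :=
  l.foldl (fun γ v => kempeFlip G W γ a b v) γ

noncomputable def runPhase (γ : V → C) (ph : Phase V C) : V → C :=
  runFlips G W γ ph.a ph.b ph.verts.toList

noncomputable def runScript (γ : V → C) (sc : List (Phase V C)) : V → C :=
  sc.foldl (runPhase G W) γ

def IsScriptOn (sc : List (Phase V C)) : Prop :=
  ∀ ph ∈ sc, ph.verts ⊆ W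

variable {G W} {γ γ' : V → C} {a b : C}

lemma runScript_append (sc sc' : List (Phase V C)) :
    runScript G W γ (sc ++ sc') = runScript G W (runScript G W γ sc) sc' :=
  List.foldl_append

lemma ProperOn.runFlips (h : ProperOn G W γ) (l : List V) :
    ProperOn G W (runFlips G W γ a b l) := by
  induction l generalizing γ with
  | nil => exact h
  | cons v l ih => exact ih h.kempeFlip

lemma ProperOn.runScript (h : ProperOn G W γ) (sc : List (Phase V C)) :
    ProperOn G W (runScript G W γ sc) := by
  induction sc generalizing γ with
  | nil => exact h
  | cons ph sc ih => exact ih (h.runFlips _)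

lemma runFlips_congr (l : List V) (hγ : ∀ x ∈ W, γ x = γ' x) :
    ∀ u ∈ W, runFlips G W γ a b l u = runFlips G W γ' a b l u := by
  induction l generalizing γ γ' with
  | nil => exact hγ
  | cons v l ih => exact ih fun x hx => kempeFlip_congr hγ hx

lemma runScript_congr (sc : List (Phase V C)) (hγ : ∀ x ∈ W, γ x = γ' x) :
    ∀ u ∈ W, runScript G W γ sc u = runScript G W γ' sc u := by
  induction sc generalizing γ γ' with
  | nil => exact hγ
  | cons ph sc ih => exact ih (runFlips_congr _ hγ)

end Scripts

section Pendant

variable [DecidableEq C] {G : SimpleGraph V} {W S : Finset V} {γ γ' : V → C} {a b : C} {v u : V}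

/-- The `a`/`b`-colored vertices of `S` can then only be dead ends of `a`/`b` Kempe chains of
`W`. -/
def Pendant (G : SimpleGraph V) (W S : Finset V) (γ : V → C) (a b : C) : Prop :=
  ∀ s ∈ S, (γ s = a ∨ γ s = b) → #{u ∈ W | G.Adj s u ∧ (γ u = a ∨ γ u = b)} ≤ 1

lemma inKempeChainOn_sdiff_or_adj (hS : G.IsIndepSet S) (hpend : Pendant G W S γ a b)
    (hv : v ∈ W \ S) (hcv : γ v = a ∨ γ v = b) (h : InKempeChainOn G W γ a b v u) :
    (u ∈ W \ S ∧ InKempeChainOn G ↑(W \ S) γ a b v u) ∨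
      (u ∈ S ∧ ∃ x ∈ W \ S, InKempeChainOn G ↑(W \ S) γ a b v x ∧ G.Adj u x) := by
  induction h with
  | refl => exact Or.inl ⟨hv, .refl⟩
  | @tail p q _ hpq ih =>
    obtain ⟨hadj, hpW, hqW, hcp, hcq⟩ := hpq
    rw [Finset.mem_coe] at hpW hqW
    rcases ih with ⟨hp, hchain⟩ | ⟨hpS, x, hx, hchain, hpx⟩
    · by_cases hqS : q ∈ S
      · exact Or.inr ⟨hqS, p, hp, hchain, hadj.symm⟩
      · have hq : q ∈ W \ S := mem_sdiff.mpr ⟨hqW, hqS⟩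
        exact Or.inl ⟨hq, hchain.tail hadj hp hq hcp hcq⟩
    · have hqS : q ∉ S := fun hqS => hS.not_adj hpS hqS hadj
      have hqx : q = x := Finset.card_le_one.mp (hpend p hpS hcp) q (by simp [hqW, hadj, hcq])
        x (by simp [(mem_sdiff.mp hx).1, hpx, hchain.color hcv])
      exact Or.inl ⟨hqx ▸ hx, hqx ▸ hchain⟩

lemma kempeFlip_sdiff_of_pendant (hS : G.IsIndepSet S) (hpend : Pendant G W S γ a b)
    (hv : v ∈ W \ S) (hu : u ∈ W \ S) :
    kempeFlip G W γ a b v u = kempeFlip G (W \ S) γ a b v u := by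
  have hvW : v ∈ W := (mem_sdiff.mp hv).1
  by_cases hcv : γ v = a ∨ γ v = b
  · by_cases hc : InKempeChainOn G ↑(W \ S) γ a b v u
    · rw [kempeFlip_of_chain ⟨hvW, hcv⟩ (hc.mono (by simp)),
        kempeFlip_of_chain ⟨hv, hcv⟩ hc]
    · have hc' : ¬InKempeChainOn G W γ a b v u := fun h => by
        rcases inKempeChainOn_sdiff_or_adj hS hpend hv hcv h with ⟨_, h⟩ | ⟨huS, _⟩
        exacts [hc h, (mem_sdiff.mp hu).2 huS]
      rw [kempeFlip_of_not_chain hc, kempeFlip_of_not_chain hc']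
  · rw [kempeFlip_of_not (by tauto), kempeFlip_of_not (by tauto)]

lemma Pendant.kempeFlip (h : Pendant G W S γ a b) :
    Pendant G W S (kempeFlip G W γ a b v) a b := by
  intro s hs hcs
  simp only [kempeFlip_eq_or_eq_iff] at hcs ⊢
  exact h s hs hcs

lemma runFlips_sdiff_of_pendant (hS : G.IsIndepSet S) (l : List V) (hl : ∀ v ∈ l, v ∈ W \ S)
    (hpend : Pendant G W S γ a b) :
    ∀ u ∈ W \ S, runFlips G W γ a b l u = runFlips G (W \ S) γ a b l u := by
  induction l generalizing γ with
  | nil => exact fun _ _ => rfl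
  | cons v l ih =>
    intro u hu
    have hl' : ∀ w ∈ l, w ∈ W \ S := fun w hw => hl w (List.mem_cons_of_mem _ hw)
    calc runFlips G W (kempeFlip G W γ a b v) a b l u
        = runFlips G (W \ S) (kempeFlip G W γ a b v) a b l u := ih hl' hpend.kempeFlip u hu
      _ = runFlips G (W \ S) (kempeFlip G (W \ S) γ a b v) a b l u :=
        runFlips_congr l (fun x hx => kempeFlip_sdiff_of_pendant hS hpend
          (hl v List.mem_cons_self) hx) u hu

end Pendant

section Recolor

variable [DecidableEq C] {G : SimpleGraph V} {W D E : Finset V} {γ τ : V → C} {c c' : C}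

def recolorPhase (γ τ : V → C) (D : Finset V) (p : C × C) : Phase V C :=
  ⟨p.1, p.2, {s ∈ D | γ s = p.1 ∧ τ s = p.2}⟩

/-- One phase per pair of colors, so that the length does not depend on `D`. -/
noncomputable def recolorScript [Fintype C] (γ τ : V → C) (D : Finset V) : List (Phase V C) :=
  (univ : Finset (C × C)).toList.map (recolorPhase γ τ D)

lemma kempeFlip_piecewise (hDW : D ⊆ W) (hD : G.IsIndepSet D) (hγ : ProperOn G W γ)
    (hτ : ∀ s ∈ D, ∀ u ∈ W, G.Adj s u → γ u ≠ τ s) (hED : E ⊆ D) {s : V}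
    (hs : s ∈ D) (hsE : s ∉ E) (hcs : γ s = c) (hc's : τ s = c') :
    kempeFlip G W (E.piecewise τ γ) c c' s = (insert s E).piecewise τ γ := by
  have hγs : E.piecewise τ γ s = c := by rw [piecewise_eq_of_notMem _ _ _ hsE, hcs]
  have hnb : ∀ w ∈ W, G.Adj s w →
      ¬(E.piecewise τ γ w = c ∨ E.piecewise τ γ w = c') := by
    intro w hw hsw
    have hwE : w ∉ E := fun hwE => hD.not_adj hs (hED hwE) hsw
    rw [piecewise_eq_of_notMem _ _ _ hwE, ← hcs, ← hc's]
    exact not_or.mpr ⟨(hγ (hDW hs) hw hsw).symm, hτ s hs w hw hsw⟩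
  rw [kempeFlip_eq_update ⟨hDW hs, Or.inl hγs⟩ hnb, hγs, Equiv.swap_apply_left,
    piecewise_insert, hc's]

lemma runFlips_piecewise (hDW : D ⊆ W) (hD : G.IsIndepSet D) (hγ : ProperOn G W γ)
    (hτ : ∀ s ∈ D, ∀ u ∈ W, G.Adj s u → γ u ≠ τ s) (l : List V) (hl : l.Nodup)
    (hls : ∀ s ∈ l, s ∈ D ∧ s ∉ E ∧ γ s = c ∧ τ s = c') (hED : E ⊆ D) :
    runFlips G W (E.piecewise τ γ) c c' l = (E ∪ l.toFinset).piecewise τ γ := by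
  induction l generalizing E with
  | nil => rw [List.toFinset_nil, union_empty]; rfl
  | cons s l ih =>
    obtain ⟨hs, hsE, hcs, hc's⟩ := hls s List.mem_cons_self
    have hls' : ∀ t ∈ l, t ∈ D ∧ t ∉ insert s E ∧ γ t = c ∧ τ t = c' := by
      intro t ht
      obtain ⟨htD, htE, hct, hc't⟩ := hls t (List.mem_cons_of_mem _ ht)
      refine ⟨htD, ?_, hct, hc't⟩
      rw [mem_insert, not_or]
      exact ⟨fun hts => (List.nodup_cons.mp hl).1 (hts ▸ ht), htE⟩
    change runFlips G W (kempeFlip G W (E.piecewise τ γ) c c' s) c c' l = _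
    rw [kempeFlip_piecewise hDW hD hγ hτ hED hs hsE hcs hc's,
      ih (List.nodup_cons.mp hl).2 hls' (insert_subset hs hED), List.toFinset_cons, union_insert,
      insert_union]

lemma runScript_recolorPhases (hDW : D ⊆ W) (hD : G.IsIndepSet D) (hγ : ProperOn G W γ)
    (hτ : ∀ s ∈ D, ∀ u ∈ W, G.Adj s u → γ u ≠ τ s) (L : List (C × C)) (hL : L.Nodup)
    (hED : E ⊆ D) (hEL : ∀ s ∈ E, (γ s, τ s) ∉ L) :
    runScript G W (E.piecewise τ γ) (L.map (recolorPhase γ τ D)) =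
      (E ∪ {s ∈ D | (γ s, τ s) ∈ L}).piecewise τ γ := by
  induction L generalizing E with
  | nil =>
    rw [filter_false_of_mem fun s _ => List.not_mem_nil, union_empty]
    rfl
  | cons p L ih =>
    set F := {s ∈ D | γ s = p.1 ∧ τ s = p.2}
    have hphase :
        runPhase G W (E.piecewise τ γ) (recolorPhase γ τ D p) = (E ∪ F).piecewise τ γ := by
      rw [runPhase, recolorPhase, runFlips_piecewise hDW hD hγ hτ _ (nodup_toList F) _ hED,
        toList_toFinset]
      intro s hs
      obtain ⟨hsD, hcs, hc's⟩ := by simpa [F] using hs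
      exact ⟨hsD, fun hsE => hEL s hsE (by simp [hcs, hc's]), hcs, hc's⟩
    change runScript G W (runPhase G W (E.piecewise τ γ) (recolorPhase γ τ D p))
      (L.map (recolorPhase γ τ D)) = _
    rw [hphase, ih (List.nodup_cons.mp hL).2 (union_subset hED (filter_subset _ _))]
    · congr 1
      ext s
      simp only [mem_union, mem_filter, List.mem_cons, Prod.ext_iff]
      tauto
    · intro s hs hsL
      rcases mem_union.mp hs with hsE | hsF
      · exact hEL s hsE (List.mem_cons_of_mem _ hsL)
      · obtain ⟨-, hcs, hc's⟩ := mem_filter.mp hsF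
        exact (List.nodup_cons.mp hL).1 ((show (γ s, τ s) = p from Prod.ext hcs hc's) ▸ hsL)

lemma runScript_recolorScript [Fintype C] (hDW : D ⊆ W) (hD : G.IsIndepSet D)
    (hγ : ProperOn G W γ)
    (hτ : ∀ s ∈ D, ∀ u ∈ W, G.Adj s u → γ u ≠ τ s) :
    runScript G W γ (recolorScript γ τ D) = D.piecewise τ γ := by
  have h := runScript_recolorPhases hDW hD hγ hτ (univ : Finset (C × C)).toList (nodup_toList _)
    (empty_subset D) (by simp)
  have hunion : (∅ ∪ {s ∈ D | (γ s, τ s) ∈ (univ : Finset (C × C)).toList}) = D := by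
    ext; simp
  rwa [piecewise_empty, hunion] at h

end Recolor

lemma length_recolorScript [DecidableEq C] [Fintype C] (γ τ : V → C) (D : Finset V) :
    (recolorScript γ τ D).length = Fintype.card C * Fintype.card C := by
  simp [recolorScript, Fintype.card_prod]

lemma isScriptOn_recolorScript [DecidableEq C] [Fintype C] {W D : Finset V} (hDW : D ⊆ W)
    (γ τ : V → C) : IsScriptOn W (recolorScript γ τ D) := by
  simp only [IsScriptOn, recolorScript, List.mem_map, mem_toList, mem_univ, true_and]
  rintro _ ⟨p, rfl⟩
  exact (filter_subset _ _).trans hDW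

section Lift

variable [DecidableEq C] [Fintype C] {G : SimpleGraph V} {W S : Finset V} {γ : V → C} {a b : C}

noncomputable def spareColors (G : SimpleGraph V) (W : Finset V) (γ : V → C) (a b : C) (s : V) :
    Finset C :=
  univ \ insert a (insert b ({u ∈ W | G.Adj s u}.image γ))

noncomputable def moveAside (G : SimpleGraph V) (W : Finset V) (γ : V → C) (a b : C) (s : V) :
    C :=
  if h : (spareColors G W γ a b s).Nonempty then h.choose else γ s

lemma moveAside_ne_of_adj (hSW : S ⊆ W) (hγ : ProperOn G W γ) :
    ∀ s ∈ S, ∀ u ∈ W, G.Adj s u → γ u ≠ moveAside G W γ a b s := by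
  intro s hs u hu hsu
  unfold moveAside
  split_ifs with h
  · have hmem := h.choose_spec
    simp only [spareColors, mem_sdiff, mem_univ, mem_insert, mem_image, mem_filter,
      true_and, not_or] at hmem
    exact fun hc => hmem.2.2 ⟨u, ⟨hu, hsu⟩, hc⟩
  · exact (hγ (hSW hs) hu hsu).symm

/-- The neighbors of `s` use every color other than `a`, `b`, and there are fewer than
`card C` of them. -/
lemma card_adj_eq_or_eq_le_one {s : V} (hdeg : degOn G W s < Fintype.card C)
    (hspare : spareColors G W γ a b s = ∅) :
    #{u ∈ W | G.Adj s u ∧ (γ u = a ∨ γ u = b)} ≤ 1 := by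
  set N := {u ∈ W | G.Adj s u}
  have hcover : univ \ {a, b} ⊆ {u ∈ N | ¬(γ u = a ∨ γ u = b)}.image γ := by
    intro c hc
    have hc' : c ∈ insert a (insert b (N.image γ)) := by
      by_contra h
      have hc : c ∈ spareColors G W γ a b s := mem_sdiff.mpr ⟨mem_univ c, h⟩
      simp [hspare] at hc
    simp only [mem_sdiff, mem_univ, mem_insert, mem_singleton, true_and, not_or] at hc
    obtain ⟨u, hu, rfl⟩ : ∃ u ∈ N, γ u = c := by simpa [hc.1, hc.2] using hc'
    exact mem_image_of_mem _ (mem_filter.mpr ⟨hu, not_or.mpr hc⟩)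
  have hsplit := card_filter_add_card_filter_not (s := N) (fun u => γ u = a ∨ γ u = b)
  have hk : Fintype.card C - 2 ≤ #{u ∈ N | ¬(γ u = a ∨ γ u = b)} :=
    calc Fintype.card C - 2 ≤ #(univ \ {a, b}) :=
          (Nat.sub_le_sub_left card_le_two _).trans (le_card_sdiff _ _)
      _ ≤ _ := (card_le_card hcover).trans card_image_le
  have hdeg' : #N < Fintype.card C := hdeg
  have hgoal :
      {u ∈ W | G.Adj s u ∧ (γ u = a ∨ γ u = b)} = {u ∈ N | γ u = a ∨ γ u = b} := by
    simp only [N, filter_filter]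
  rw [hgoal]
  omega

lemma pendant_piecewise_moveAside (hS : G.IsIndepSet S)
    (hdeg : ∀ s ∈ S, degOn G W s < Fintype.card C) :
    Pendant G W S (S.piecewise (moveAside G W γ a b) γ) a b := by
  intro s hs hcs
  rw [piecewise_eq_of_mem _ _ _ hs] at hcs
  have hspare : spareColors G W γ a b s = ∅ := by
    by_contra h
    have hmem := (nonempty_iff_ne_empty.mpr h).choose_spec
    simp only [moveAside, dif_pos (nonempty_iff_ne_empty.mpr h)] at hcs
    simp only [spareColors, mem_sdiff, mem_insert] at hmem
    tauto
  have hcs' : γ s = a ∨ γ s = b := by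
    simpa [moveAside, hspare] using hcs
  refine le_trans (le_of_eq (congrArg card (filter_congr fun u _ => ?_)))
    (card_adj_eq_or_eq_le_one (hdeg s hs) hspare)
  refine and_congr_right fun hsu => ?_
  rw [piecewise_eq_of_notMem _ _ _ fun huS => hS.not_adj hs huS hsu]

lemma exists_lift_phase (hSW : S ⊆ W) (hS : G.IsIndepSet S)
    (hdeg : ∀ s ∈ S, degOn G W s < Fintype.card C) (hγ : ProperOn G W γ) (ph : Phase V C)
    (hph : ph.verts ⊆ W \ S) :
    ∃ sc, IsScriptOn W sc ∧ sc.length = Fintype.card C * Fintype.card C + 1 ∧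
      ∀ u ∈ W \ S, runScript G W γ sc u = runPhase G (W \ S) γ ph u := by
  set τ := moveAside G W γ ph.a ph.b
  refine ⟨recolorScript γ τ S ++ [ph], ?_, by simp [length_recolorScript], fun u hu => ?_⟩
  · intro p hp
    rcases List.mem_append.mp hp with hp | hp
    · exact isScriptOn_recolorScript hSW γ τ p hp
    · rw [List.mem_singleton.mp hp]
      exact hph.trans sdiff_subset
  have hagree : ∀ x ∈ W \ S, S.piecewise τ γ x = γ x :=
    fun x hx => piecewise_eq_of_notMem _ _ _ (mem_sdiff.mp hx).2
  rw [runScript_append, runScript_recolorScript hSW hS hγ (moveAside_ne_of_adj hSW hγ)]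
  calc runPhase G W (S.piecewise τ γ) ph u
      = runPhase G (W \ S) (S.piecewise τ γ) ph u :=
        runFlips_sdiff_of_pendant hS _ (fun v hv => hph (mem_toList.mp hv))
          (pendant_piecewise_moveAside hS hdeg) u hu
    _ = runPhase G (W \ S) γ ph u := runFlips_congr _ hagree u hu

lemma exists_lift_script (hSW : S ⊆ W) (hS : G.IsIndepSet S)
    (hdeg : ∀ s ∈ S, degOn G W s < Fintype.card C) (sc : List (Phase V C))
    (hsc : IsScriptOn (W \ S) sc) (hγ : ProperOn G W γ) :
    ∃ sc', IsScriptOn W sc' ∧ sc'.length = (Fintype.card C * Fintype.card C + 1) * sc.length ∧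
      ∀ u ∈ W \ S, runScript G W γ sc' u = runScript G (W \ S) γ sc u := by
  induction sc generalizing γ with
  | nil => exact ⟨[], by simp [IsScriptOn], rfl, fun _ _ => rfl⟩
  | cons ph sc ih =>
    obtain ⟨sc₁, hsc₁, hlen₁, hrun₁⟩ :=
      exists_lift_phase hSW hS hdeg hγ ph (hsc ph List.mem_cons_self)
    obtain ⟨sc₂, hsc₂, hlen₂, hrun₂⟩ :=
      ih (fun p hp => hsc p (List.mem_cons_of_mem _ hp)) (hγ.runScript sc₁)
    refine ⟨sc₁ ++ sc₂, ?_, by simp [hlen₁, hlen₂, mul_add, add_comm], fun u hu => ?_⟩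
    · intro p hp
      rcases List.mem_append.mp hp with hp | hp
      exacts [hsc₁ p hp, hsc₂ p hp]
    rw [runScript_append, hrun₂ u hu]
    exact runScript_congr sc hrun₁ u hu

end Lift

def Peelable (G : SimpleGraph V) (k : ℕ) (ρ : ℝ) (W : Finset V) : Prop :=
  ∃ S ⊆ W, S.Nonempty ∧ G.IsIndepSet S ∧ (∀ s ∈ S, degOn G W s < k) ∧
    (#(W \ S) : ℝ) + 1 ≤ ρ * (#W + 1)

lemma mul_pow_le_pow_of_le_mul {q ρ x y : ℝ} {d : ℕ} (hq : 0 ≤ q) (hx : 0 ≤ x)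
    (hxy : x ≤ ρ * y) (hy : 0 ≤ y) (hd : q * ρ ^ d ≤ 1) : q * x ^ d ≤ y ^ d :=
  calc q * x ^ d ≤ q * (ρ * y) ^ d := by gcongr
    _ = q * ρ ^ d * y ^ d := by ring
    _ ≤ 1 * y ^ d := by gcongr
    _ = y ^ d := one_mul _

/-- Lifting multiplies the number of phases by `k² + 1`, while the peeled set has shrunk by the
factor `ρ`; the choice of `d` makes the two effects cancel. -/
theorem exists_recoloring_script [DecidableEq C] [Fintype C] {G : SimpleGraph V} {ρ : ℝ}
    {d : ℕ} (hpeel : ∀ W : Finset V, W.Nonempty → Peelable G (Fintype.card C) ρ W)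
    (hd : ((Fintype.card C : ℝ) * Fintype.card C + 1) * ρ ^ d ≤ 1)
    (W : Finset V) {α β : V → C} (hα : ProperOn G W α) (hβ : ProperOn G W β) :
    ∃ sc, IsScriptOn W sc ∧ (∀ u ∈ W, runScript G W α sc u = β u) ∧
      sc.length + 1 ≤ (#W + 1) ^ d := by
  induction W using Finset.strongInduction generalizing α β with
  | H W ih =>
  rcases W.eq_empty_or_nonempty with rfl | hW
  · exact ⟨[], by simp [IsScriptOn], by simp, by simp⟩
  obtain ⟨S, hSW, hSne, hS, hdeg, hshrink⟩ := hpeel W hW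
  have hsub : W \ S ⊆ W := sdiff_subset
  obtain ⟨sc₀, hsc₀, hrun₀, hlen₀⟩ := ih (W \ S) (sdiff_ssubset hSW hSne)
    (fun _ hu _ hw => hα (hsub hu) (hsub hw)) (fun _ hu _ hw => hβ (hsub hu) (hsub hw))
  obtain ⟨sc₁, hsc₁, hlen₁, hrun₁⟩ := exists_lift_script hSW hS hdeg sc₀ hsc₀ hα
  set γ := runScript G W α sc₁
  have hγβ : ∀ u ∈ W \ S, γ u = β u := fun u hu => (hrun₁ u hu).trans (hrun₀ u hu)
  have hfree : ∀ s ∈ S, ∀ u ∈ W, G.Adj s u → γ u ≠ β s := by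
    intro s hs u hu hsu
    rw [hγβ u (mem_sdiff.mpr ⟨hu, fun huS => hS.not_adj hs huS hsu⟩)]
    exact hβ hu (hSW hs) hsu.symm
  refine ⟨sc₁ ++ recolorScript γ β S, ?_, fun u hu => ?_, ?_⟩
  · intro p hp
    rcases List.mem_append.mp hp with hp | hp
    exacts [hsc₁ p hp, isScriptOn_recolorScript hSW γ β p hp]
  · rw [runScript_append, runScript_recolorScript hSW hS (hα.runScript sc₁) hfree]
    by_cases huS : u ∈ S
    · exact piecewise_eq_of_mem _ _ _ huS
    · rw [piecewise_eq_of_notMem _ _ _ huS]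
      exact hγβ u (mem_sdiff.mpr ⟨hu, huS⟩)
  · have key := mul_pow_le_pow_of_le_mul (by positivity) (by positivity) hshrink (by positivity) hd
    have hlen : (sc₁ ++ recolorScript γ β S).length + 1 =
        (Fintype.card C * Fintype.card C + 1) * (sc₀.length + 1) := by
      simp only [List.length_append, hlen₁, length_recolorScript]
      ring
    rw [hlen]
    calc (Fintype.card C * Fintype.card C + 1) * (sc₀.length + 1)
        ≤ (Fintype.card C * Fintype.card C + 1) * (#(W \ S) + 1) ^ d :=
          Nat.mul_le_mul_left _ hlen₀
      _ ≤ (#W + 1) ^ d := by exact_mod_cast key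

section Counting

variable {G : SimpleGraph V} {k : ℕ} {ε : ℝ}

lemma degOn_mono {W W' : Finset V} (h : W ⊆ W') (v : V) : degOn G W v ≤ degOn G W' v :=
  card_le_card (filter_subset_filter _ h)

/-- Greedy choice: taking `x` into `S` discards at most `k` vertices, `x` and its neighbors. -/
lemma exists_isIndepSet_card_le (L : Finset V) (hL : ∀ x ∈ L, degOn G L x < k) :
    ∃ S ⊆ L, G.IsIndepSet S ∧ #L ≤ k * #S := by
  induction L using Finset.strongInduction with
  | H L ih =>
  rcases L.eq_empty_or_nonempty with rfl | ⟨x, hx⟩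
  · exact ⟨∅, empty_subset _, by simp, by simp⟩
  set X := insert x {u ∈ L | G.Adj x u}
  have hXL : X ⊆ L := insert_subset hx (filter_subset _ _)
  obtain ⟨S, hSL, hS, hcard⟩ := ih (L \ X) (sdiff_ssubset hXL (insert_nonempty _ _))
    fun y hy => (degOn_mono sdiff_subset y).trans_lt (hL y (mem_sdiff.mp hy).1)
  have hSX : ∀ y ∈ S, y ∈ L ∧ y ∉ X := fun y hy => mem_sdiff.mp (hSL hy)
  have hxS : x ∉ S := fun h => (hSX x h).2 (mem_insert_self _ _)
  refine ⟨insert x S, insert_subset hx (hSL.trans sdiff_subset), ?_, ?_⟩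
  · rw [coe_insert]
    refine Set.Pairwise.insert hS fun y hy _ => ?_
    have hxy : ¬G.Adj x y := fun h =>
      (hSX y hy).2 (mem_insert_of_mem (mem_filter.mpr ⟨(hSX y hy).1, h⟩))
    exact ⟨hxy, fun h => hxy h.symm⟩
  · have hX : #X ≤ k := (card_insert_le _ _).trans (hL x hx)
    have hLX : #L ≤ #(L \ X) + #X := card_le_card_sdiff_add_card
    rw [card_insert_of_notMem hxS, mul_add_one]
    omega

lemma mul_card_le_mul_card_degOn_lt {W : Finset V}
    (hW : (∑ v ∈ W, (degOn G W v : ℝ)) ≤ (k - ε) * #W) :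
    ε * #W ≤ k * #{v ∈ W | degOn G W v < k} := by
  have hhigh : (k : ℝ) * #{v ∈ W | ¬degOn G W v < k} ≤ ∑ v ∈ W, (degOn G W v : ℝ) :=
    calc (k : ℝ) * #{v ∈ W | ¬degOn G W v < k}
        = ∑ v ∈ W with ¬degOn G W v < k, (k : ℝ) := by rw [sum_const, nsmul_eq_mul, mul_comm]
      _ ≤ ∑ v ∈ W with ¬degOn G W v < k, (degOn G W v : ℝ) :=
        sum_le_sum fun v hv => by exact_mod_cast not_lt.mp (mem_filter.mp hv).2
      _ ≤ ∑ v ∈ W, (degOn G W v : ℝ) :=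
        sum_le_sum_of_subset_of_nonneg (filter_subset _ _) fun _ _ _ => by positivity
  have hsplit : (k : ℝ) * #{v ∈ W | degOn G W v < k} + k * #{v ∈ W | ¬degOn G W v < k} =
      k * #W := by
    rw [← mul_add]
    exact_mod_cast congrArg (k * ·) (card_filter_add_card_filter_not _)
  linarith

lemma card_sdiff_add_one_le {W S : Finset V} {δ : ℝ} (hSW : S ⊆ W) (hW : W.Nonempty)
    (hδ : 0 ≤ δ) (hS : δ * #W ≤ #S) : (#(W \ S) : ℝ) + 1 ≤ (1 - δ / 2) * (#W + 1) := by
  have hW1 : (1 : ℝ) ≤ #W := by exact_mod_cast hW.card_pos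
  rw [card_sdiff_of_subset hSW, Nat.cast_sub (card_le_card hSW)]
  nlinarith

/-- The density bound forces an `ε / k`-fraction of `W` to have degree below `k`, and these
vertices contain an independent set of a `1 / k`-fraction of them. -/
lemma peelable_of_sum_degOn_le (hε : 0 < ε)
    (hmad : ∀ W : Finset V, W.Nonempty → (∑ v ∈ W, (degOn G W v : ℝ)) ≤ (k - ε) * #W)
    (W : Finset V) (hW : W.Nonempty) :
    Peelable G k (1 - min (ε / (k * k + 1)) 1 / 2) W := by
  set L := {v ∈ W | degOn G W v < k}
  obtain ⟨S, hSL, hS, hLS⟩ := exists_isIndepSet_card_le (G := G) L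
    fun x hx => (degOn_mono (filter_subset _ W) x).trans_lt (mem_filter.mp hx).2
  have hSW : S ⊆ W := hSL.trans (filter_subset _ _)
  have hεS : ε * #W ≤ (k * k + 1) * #S := by
    have h1 := mul_card_le_mul_card_degOn_lt (hmad W hW)
    have h2 : (#L : ℝ) ≤ k * #S := by exact_mod_cast hLS
    have h3 : (k : ℝ) * #L ≤ k * (k * #S) := by gcongr
    nlinarith [(#S).cast_nonneg (α := ℝ)]
  have hδ : min (ε / (k * k + 1)) 1 * #W ≤ #S :=
    calc min (ε / (k * k + 1)) 1 * #W ≤ ε / (k * k + 1) * #W := by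
          gcongr; exact min_le_left _ _
      _ ≤ #S := by rw [div_mul_eq_mul_div, div_le_iff₀ (by positivity)]; linarith
  have hSne : S.Nonempty := by
    rw [← card_pos, ← Nat.cast_pos (α := ℝ)]
    have : (0 : ℝ) < ε * #W := mul_pos hε (by exact_mod_cast hW.card_pos)
    nlinarith
  exact ⟨S, hSW, hSne, hS, fun s hs => (mem_filter.mp (hSL hs)).2,
    card_sdiff_add_one_le hSW hW (by positivity) hδ⟩

lemma exists_mul_pow_le_one {q ρ : ℝ} (hq : 0 < q) (hρ : ρ < 1) :
    ∃ d : ℕ, q * ρ ^ d ≤ 1 := by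
  obtain ⟨d, hd⟩ := exists_pow_lt_of_lt_one (inv_pos.mpr hq) hρ
  exact ⟨d, by rw [← le_div_iff₀' hq, one_div]; exact hd.le⟩

end Counting

section Equivalence

lemma properOn_univ [Fintype V] {G : SimpleGraph V} {γ : V → C} :
    ProperOn G univ γ ↔ IsProperColoring G γ :=
  ⟨fun h _ _ huv => h (mem_univ _) (mem_univ _) huv, fun h _ _ _ _ huv => h huv⟩

variable [DecidableEq C] [Fintype V] {G : SimpleGraph V} {γ : V → C} {a b : C} {v : V}

lemma kempeStep_kempeFlip (hv : v ∈ univ ∧ (γ v = a ∨ γ v = b)) :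
    KempeStep G γ (kempeFlip G univ γ a b v) :=
  ⟨a, b, v, hv.2, fun _ hu => kempeFlip_of_chain hv (by simpa [InKempeChain] using hu),
    fun _ hu => kempeFlip_of_not_chain (by simpa [InKempeChain] using hu)⟩

lemma kempeEquivIn_runFlips (hγ : IsProperColoring G γ) (l : List V) :
    KempeEquivIn G (IsProperColoring G) l.length γ (runFlips G univ γ a b l) := by
  induction l generalizing γ with
  | nil => exact KempeEquivIn.refl hγ
  | cons v l ih =>
    have hγ' : IsProperColoring G (kempeFlip G univ γ a b v) :=
      properOn_univ.mp (properOn_univ.mpr hγ).kempeFlip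
    have hstep : KempeEquivIn G (IsProperColoring G) 1 γ (kempeFlip G univ γ a b v) := by
      by_cases hv : v ∈ univ ∧ (γ v = a ∨ γ v = b)
      · exact (kempeStep_kempeFlip hv).kempeEquivIn hγ hγ'
      · rw [kempeFlip_of_not hv]
        exact (KempeEquivIn.refl hγ).mono zero_le_one
    rw [List.length_cons, add_comm]
    exact hstep.trans (ih hγ')

lemma kempeEquivIn_runScript (hγ : IsProperColoring G γ) (sc : List (Phase V C)) :
    KempeEquivIn G (IsProperColoring G) (sc.length * Fintype.card V) γ
      (runScript G univ γ sc) := by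
  induction sc generalizing γ with
  | nil => exact (KempeEquivIn.refl hγ).mono (by simp)
  | cons ph sc ih =>
    have hγ' := properOn_univ.mp ((properOn_univ.mpr hγ).runFlips (a := ph.a) (b := ph.b)
      ph.verts.toList)
    refine ((kempeEquivIn_runFlips hγ _).trans (ih hγ')).mono ?_
    rw [length_toList, List.length_cons, add_mul, one_mul, add_comm]
    exact Nat.add_le_add_left (card_le_univ _) _

end Equivalence

lemma ncard_adj_eq_sum_degOn (G : SimpleGraph V) (W : Finset V) :
    {p : V × V | p.1 ∈ (W : Set V) ∧ p.2 ∈ (W : Set V) ∧ G.Adj p.1 p.2}.ncard =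
      ∑ v ∈ W, degOn G W v := by
  have hset : {p : V × V | p.1 ∈ (W : Set V) ∧ p.2 ∈ (W : Set V) ∧ G.Adj p.1 p.2} =
      ↑{p ∈ W ×ˢ W | G.Adj p.1 p.2} := by
    ext p
    simp [and_assoc]
  simp only [hset, Set.ncard_coe_finset, card_filter, sum_product, degOn]

lemma mul_le_two_pow_mul_pow {m n d : ℕ} (h : m + 1 ≤ (n + 1) ^ d) :
    m * n ≤ 2 ^ d * n ^ (d + 1) := by
  rcases n.eq_zero_or_pos with rfl | hn
  · simp
  calc m * n ≤ (n + 1) ^ d * n := Nat.mul_le_mul_right _ (by omega)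
    _ ≤ (2 * n) ^ d * n := by gcongr; omega
    _ = 2 ^ d * n ^ (d + 1) := by ring

end Kempe

open Kempe

theorem statement_1 (k : ℕ) (ε : ℝ) (hε : 0 < ε) :
    ∃ C d : ℕ, ∀ (n : ℕ) (G : SimpleGraph (Fin n)),
      (∀ s : Set (Fin n), s.Nonempty →
        ({p : Fin n × Fin n | p.1 ∈ s ∧ p.2 ∈ s ∧ G.Adj p.1 p.2}.ncard : ℝ) ≤
          ((k : ℝ) - ε) * s.ncard) →
      ∀ α β : Fin n → Fin k, IsProperColoring G α → IsProperColoring G β →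
        KempeEquivIn G (IsProperColoring G) (C * n ^ d) α β := by
  set ρ : ℝ := 1 - min (ε / (k * k + 1)) 1 / 2
  have hρ : ρ < 1 := sub_lt_self 1 (half_pos (lt_min (by positivity) one_pos))
  obtain ⟨d, hd⟩ := exists_mul_pow_le_one (q := (k : ℝ) * k + 1) (by positivity) hρ
  refine ⟨2 ^ d, d + 1, fun n G hmad α β hα hβ => ?_⟩
  have hpeel : ∀ W : Finset (Fin n), W.Nonempty → Peelable G k ρ W :=
    peelable_of_sum_degOn_le hε fun W hW => by
      have h := hmad W (by exact_mod_cast hW)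
      rwa [ncard_adj_eq_sum_degOn, Set.ncard_coe_finset, Nat.cast_sum] at h
  obtain ⟨sc, -, hrun, hlen⟩ := exists_recoloring_script (C := Fin k) (by simpa using hpeel)
    (by simpa using hd) univ (properOn_univ.mpr hα) (properOn_univ.mpr hβ)
  have hK := kempeEquivIn_runScript hα sc
  rw [show runScript G univ α sc = β from funext fun u => hrun u (mem_univ u)] at hK
  simp only [card_univ, Fintype.card_fin] at hlen hK
  exact hK.mono (mul_le_two_pow_mul_pow hlen)
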